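/- Let g : [-1,1] → ℝ be continuous and not identically zero, and suppose g vanishes on an infinite subset of [-1,1]. Then for every natural number d, g has at least d+1 distinct zeros in [-1,1]; consequently, if g is C^{d+1}, there is a point t_0 with |g^{(d+1)}(t_0)| ≥ m·(d+1)!/2^{d+1}, where m = max|g| > 0. -/

import Mathlib

/-!
Any `d + 1` points of the infinite zero set give the zeros. For the derivative bound, pick `t`
with `|g t| = m` and let `p` be the polynomial of degree `d + 1` that vanishes on these zeros
and equals `g` at `t`. Then `g - p` has `d + 2` zeros, so by iterated Rolle
`g⁽ᵈ⁺¹⁾ ξ = p⁽ᵈ⁺¹⁾ = (d + 1)! g t / ∏ (t - zᵢ)` for some `ξ`, and each `|t - zᵢ| ≤ 2`.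
-/

open Set Finset Polynomial

namespace Polynomial

protected theorem iteratedDeriv {𝕜 : Type*} [NontriviallyNormedField 𝕜] (n : ℕ) (p : 𝕜[X])
    (x : 𝕜) : iteratedDeriv n (fun x => p.eval x) x = (derivative^[n] p).eval x := by
  rw [iteratedDeriv_eq_iterate]
  induction n generalizing p with
  | zero => rfl
  | succ n ih =>
    have hderiv : _root_.deriv (fun x => p.eval x) = fun x => p.derivative.eval x := by
      ext
      exact p.deriv
    rw [Function.iterate_succ_apply, Function.iterate_succ_apply, hderiv, ih]

theorem iterate_derivative_prod_X_sub_C_self {R : Type*} [CommRing R] (S : Finset R) :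
    derivative^[#S] (∏ a ∈ S, (X - C a)) = (#S).factorial := by
  simp [iterate_derivative_prod_X_sub_C le_rfl]

end Polynomial

theorem exists_finset_deriv_eq_zero {f : ℝ → ℝ} {a b : ℝ} (hf : ContinuousOn f (Icc a b))
    {Z : Finset ℝ} {n : ℕ} (hZ : (Z : Set ℝ) ⊆ Icc a b) (hcard : #Z = n + 1)
    (hzero : ∀ z ∈ Z, f z = 0) :
    ∃ Z' : Finset ℝ, #Z' = n ∧ (Z' : Set ℝ) ⊆ Ioo a b ∧ ∀ c ∈ Z', deriv f c = 0 := by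
  set z := Z.orderEmbOfFin hcard
  have hz_mem : ∀ i, z i ∈ Icc a b := fun i => hZ (Z.orderEmbOfFin_mem hcard i)
  have hgap : ∀ i : Fin n, ∃ c ∈ Ioo (z i.castSucc) (z i.succ), deriv f c = 0 := fun i =>
    exists_deriv_eq_zero (z.strictMono i.castSucc_lt_succ)
      (hf.mono (Icc_subset_Icc (hz_mem _).1 (hz_mem _).2))
      (by rw [hzero _ (Z.orderEmbOfFin_mem hcard _), hzero _ (Z.orderEmbOfFin_mem hcard _)])
  choose c hc_mem hc_zero using hgap
  have hc : StrictMono c := fun i j hij =>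
    calc c i < z i.succ := (hc_mem i).2
      _ ≤ z j.castSucc := z.monotone (Fin.succ_le_castSucc_iff.2 hij)
      _ < c j := (hc_mem j).1
  refine ⟨univ.map ⟨c, hc.injective⟩, by simp, ?_, by simpa using hc_zero⟩
  intro x hx
  obtain ⟨i, -, rfl⟩ := mem_map.1 hx
  exact ⟨(hz_mem _).1.trans_lt (hc_mem i).1, (hc_mem i).2.trans_le (hz_mem _).2⟩

theorem exists_iteratedDerivWithin_eq_zero {f : ℝ → ℝ} {a b : ℝ} {n : ℕ}
    (hf : ContDiffOn ℝ n f (Icc a b)) {Z : Finset ℝ} (hZ : (Z : Set ℝ) ⊆ Icc a b)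
    (hcard : #Z = n + 1) (hzero : ∀ z ∈ Z, f z = 0) :
    ∃ ξ ∈ Icc a b, iteratedDerivWithin n f (Icc a b) ξ = 0 := by
  induction n generalizing f Z with
  | zero =>
    obtain ⟨z, hz⟩ := (card_pos (s := Z)).1 (by omega)
    exact ⟨z, hZ hz, by simpa using hzero z hz⟩
  | succ n ih =>
    obtain ⟨Z', hcard', hZ', hzero'⟩ :=
      exists_finset_deriv_eq_zero hf.continuousOn hZ hcard hzero
    obtain ⟨c, hc⟩ := (card_pos (s := Z')).1 (by omega)
    have hs : UniqueDiffOn ℝ (Icc a b) := uniqueDiffOn_Icc ((hZ' hc).1.trans (hZ' hc).2)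
    have hderiv : ∀ c ∈ Z', derivWithin f (Icc a b) c = 0 := fun c hc => by
      rw [derivWithin_of_mem_nhds (Icc_mem_nhds (hZ' hc).1 (hZ' hc).2), hzero' c hc]
    obtain ⟨ξ, hξ, hξ_zero⟩ := ih (hf.derivWithin hs (by norm_cast))
      (hZ'.trans Ioo_subset_Icc_self) hcard' hderiv
    exact ⟨ξ, hξ, by rwa [iteratedDerivWithin_succ']⟩

theorem abs_prod_sub_le_pow {a b t : ℝ} (ht : t ∈ Icc a b) {Z : Finset ℝ}
    (hZ : (Z : Set ℝ) ⊆ Icc a b) : |∏ z ∈ Z, (t - z)| ≤ (b - a) ^ #Z := by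
  rw [abs_prod, ← prod_const]
  refine prod_le_prod (fun _ _ => abs_nonneg _) fun z hz => abs_sub_le_iff.2 ?_
  have := hZ hz
  constructor <;> linarith [ht.1, ht.2, this.1, this.2]

theorem exists_eq_prod_mul_iteratedDerivWithin {f : ℝ → ℝ} {a b : ℝ} {n : ℕ} (hab : a < b)
    (hf : ContDiffOn ℝ n f (Icc a b)) {Z : Finset ℝ} (hZ : (Z : Set ℝ) ⊆ Icc a b)
    (hcard : #Z = n) (hzero : ∀ z ∈ Z, f z = 0) {t : ℝ} (ht : t ∈ Icc a b) :
    ∃ ξ ∈ Icc a b,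
      f t * n.factorial = (∏ z ∈ Z, (t - z)) * iteratedDerivWithin n f (Icc a b) ξ := by
  by_cases htZ : t ∈ Z
  · exact ⟨t, ht, by rw [hzero t htZ, prod_eq_zero htZ (sub_self t), zero_mul, zero_mul]⟩
  set w := ∏ z ∈ Z, (t - z)
  have hw : w ≠ 0 :=
    prod_ne_zero_iff.2 fun z hz => sub_ne_zero.2 (ne_of_mem_of_not_mem hz htZ).symm
  set p : ℝ[X] := C (f t / w) * ∏ z ∈ Z, (X - C z)
  have hp_eval : ∀ x, p.eval x = f t / w * ∏ z ∈ Z, (x - z) := fun x => by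
    simp [p, eval_prod]
  have hp_deriv : derivative^[n] p = C (f t / w * n.factorial) := by
    rw [iterate_derivative_C_mul, ← hcard, iterate_derivative_prod_X_sub_C_self]
    simp
  have hp_smooth : ContDiff ℝ n (fun x => p.eval x) := by
    simpa using p.contDiff_aeval (𝕜 := ℝ) n
  have hdiff_zero : ∀ x ∈ insert t Z, (f - fun x => p.eval x) x = 0 := by
    rw [Finset.forall_mem_insert]
    refine ⟨?_, fun z hz => ?_⟩
    · simp only [Pi.sub_apply, hp_eval]
      field_simp
      ring
    · simp only [Pi.sub_apply, hp_eval, hzero z hz, prod_eq_zero hz (sub_self z)]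
      ring
  obtain ⟨ξ, hξ, hξ_zero⟩ := exists_iteratedDerivWithin_eq_zero
    (f := f - fun x => p.eval x) (hf.sub hp_smooth.contDiffOn)
    (coe_insert t Z ▸ insert_subset ht hZ) (by rw [card_insert_of_notMem htZ, hcard]) hdiff_zero
  have hs : UniqueDiffOn ℝ (Icc a b) := uniqueDiffOn_Icc hab
  rw [iteratedDerivWithin_sub hξ hs (hf ξ hξ) hp_smooth.contDiffWithinAt, sub_eq_zero,
    iteratedDerivWithin_eq_iteratedDeriv hs hp_smooth.contDiffAt hξ, Polynomial.iteratedDeriv,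
    hp_deriv, eval_C] at hξ_zero
  refine ⟨ξ, hξ, ?_⟩
  rw [hξ_zero]
  field_simp

theorem infinite_zeros_rigidity_general
    (g : ℝ → ℝ)
    (hinf : {t ∈ Set.Icc (-1 : ℝ) 1 | g t = 0}.Infinite)
    (d : ℕ) (m : ℝ)
    (hattain : ∃ t ∈ Set.Icc (-1 : ℝ) 1, |g t| = m) :
    (∃ Z : Finset ℝ, (Z : Set ℝ) ⊆ Set.Icc (-1 : ℝ) 1 ∧ d + 1 ≤ Z.card ∧
        ∀ t ∈ Z, g t = 0) ∧
    (ContDiffOn ℝ (d + 1) g (Set.Icc (-1 : ℝ) 1) →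
      ∃ t₀ ∈ Set.Icc (-1 : ℝ) 1,
        m * (Nat.factorial (d + 1) : ℝ) / 2 ^ (d + 1) ≤
          |iteratedDerivWithin (d + 1) g (Set.Icc (-1 : ℝ) 1) t₀|) := by
  obtain ⟨Z, hZ, hcard⟩ := hinf.exists_subset_card_eq (d + 1)
  have hZ_Icc : (Z : Set ℝ) ⊆ Icc (-1) 1 := fun z hz => (hZ hz).1
  have hZ_zero : ∀ z ∈ Z, g z = 0 := fun z hz => (hZ hz).2
  refine ⟨⟨Z, hZ_Icc, hcard.ge, hZ_zero⟩, fun hg => ?_⟩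
  obtain ⟨t, ht, rfl⟩ := hattain
  obtain ⟨ξ, hξ, hξ_eq⟩ := exists_eq_prod_mul_iteratedDerivWithin (by norm_num)
    (by exact_mod_cast hg) hZ_Icc hcard hZ_zero ht
  have hprod : |∏ z ∈ Z, (t - z)| ≤ 2 ^ (d + 1) := by
    simpa [hcard, one_add_one_eq_two] using abs_prod_sub_le_pow ht hZ_Icc
  refine ⟨ξ, hξ, (div_le_iff₀ (by positivity)).2 ?_⟩
  calc |g t| * (d + 1).factorial
      = |∏ z ∈ Z, (t - z)| * |iteratedDerivWithin (d + 1) g (Icc (-1) 1) ξ| := by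
        rw [← abs_mul, ← hξ_eq, abs_mul, Nat.abs_cast]
    _ ≤ 2 ^ (d + 1) * |iteratedDerivWithin (d + 1) g (Icc (-1) 1) ξ| := by gcongr
    _ = |iteratedDerivWithin (d + 1) g (Icc (-1) 1) ξ| * 2 ^ (d + 1) := mul_comm _ _

/-- If `g : [-1,1] → ℝ` is continuous, not identically zero, and vanishes on an infinite
subset of `[-1,1]`, then for every `d` it has at least `d+1` distinct zeros in `[-1,1]`;
consequently, if `g` is `C^{d+1}` on `[-1,1]` with `max |g| = m` (so `m > 0`), there is a
point `t₀` with `|g^{(d+1)}(t₀)| ≥ m (d+1)!/2^(d+1)`. -/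
theorem infinite_zeros_rigidity
    (g : ℝ → ℝ) (hgc : ContinuousOn g (Set.Icc (-1 : ℝ) 1))
    (hnz : ∃ t ∈ Set.Icc (-1 : ℝ) 1, g t ≠ 0)
    (hinf : {t ∈ Set.Icc (-1 : ℝ) 1 | g t = 0}.Infinite)
    (d : ℕ) (m : ℝ)
    (hbound : ∀ t ∈ Set.Icc (-1 : ℝ) 1, |g t| ≤ m)
    (hattain : ∃ t ∈ Set.Icc (-1 : ℝ) 1, |g t| = m) :
    (∃ Z : Finset ℝ, (Z : Set ℝ) ⊆ Set.Icc (-1 : ℝ) 1 ∧ d + 1 ≤ Z.card ∧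
        ∀ t ∈ Z, g t = 0) ∧
    (ContDiffOn ℝ (d + 1) g (Set.Icc (-1 : ℝ) 1) →
      ∃ t₀ ∈ Set.Icc (-1 : ℝ) 1,
        m * (Nat.factorial (d + 1) : ℝ) / 2 ^ (d + 1) ≤
          |iteratedDerivWithin (d + 1) g (Set.Icc (-1 : ℝ) 1) t₀|) :=
  infinite_zeros_rigidity_general g hinf d m hattain
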